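/- arXiv:math/0610243 — 2 statements merged into one kernel-verified Lean document; each statement's English description precedes it below -/
import Mathlib

section
/- For every t ≥ 0, the infinite product ∏_{n≥0} Γ(n+1, t)/n! is at most (1+t)·e^{-2t}, where Γ(n, t) = ∫_t^∞ e^{-u} u^{n-1} du is the upper incomplete gamma function. -/
open MeasureTheory Real

/-- `uGamma n t = Γ(n+1, t) = ∫_t^∞ e^{-u} u^n du`, the upper incomplete gamma function. -/
noncomputable def uGamma (n : ℕ) (t : ℝ) : ℝ := ∫ u in Set.Ioi t, Real.exp (-u) * u ^ n

lemma uGamma_integrableOn (n : ℕ) :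
    IntegrableOn (fun u : ℝ => Real.exp (-u) * u ^ n) (Set.Ioi 0) := by
  have h := Real.GammaIntegral_convergent (s := (n : ℝ) + 1) (by positivity)
  apply h.congr_fun ?_ measurableSet_Ioi
  intro x hx
  simp [add_sub_cancel_right, Real.rpow_natCast]

lemma uGamma_zero_eq (n : ℕ) : uGamma n 0 = (Nat.factorial n : ℝ) := by
  have h1 : Real.Gamma ((n : ℝ) + 1) = ∫ x in Set.Ioi (0:ℝ),
      Real.exp (-x) * x ^ ((n : ℝ) + 1 - 1) := Real.Gamma_eq_integral (by positivity)
  have h2 : Real.Gamma ((n : ℝ) + 1) = (Nat.factorial n : ℝ) := by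
    exact_mod_cast Real.Gamma_nat_eq_factorial n
  rw [uGamma, ← h2, h1]
  apply setIntegral_congr_fun measurableSet_Ioi
  intro x hx
  simp [add_sub_cancel_right, Real.rpow_natCast]

lemma uGamma_nonneg (n : ℕ) {t : ℝ} (ht : 0 ≤ t) : 0 ≤ uGamma n t := by
  apply setIntegral_nonneg measurableSet_Ioi
  intro x hx
  have hx0 : 0 ≤ x := le_trans ht (le_of_lt hx)
  positivity

lemma uGamma_le (n : ℕ) {t : ℝ} (ht : 0 ≤ t) : uGamma n t ≤ (Nat.factorial n : ℝ) := by
  rw [← uGamma_zero_eq n]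
  apply setIntegral_mono_set (uGamma_integrableOn n)
  · filter_upwards [ae_restrict_mem measurableSet_Ioi] with x hx
    have hx0 : (0:ℝ) ≤ x := le_of_lt hx
    positivity
  · exact Filter.Eventually.of_forall fun x hx => lt_of_le_of_lt ht hx

lemma hasProd_of_le_one {f : ℕ → ℝ} (h0 : ∀ n, 0 ≤ f n) (h1 : ∀ n, f n ≤ 1) :
    HasProd f (⨅ s : Finset ℕ, ∏ i ∈ s, f i) := by
  have hanti : Antitone fun s : Finset ℕ => ∏ i ∈ s, f i := by
    intro s u hsu
    calc ∏ i ∈ u, f i = (∏ i ∈ u \ s, f i) * ∏ i ∈ s, f i := (Finset.prod_sdiff hsu).symm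
      _ ≤ 1 * ∏ i ∈ s, f i := by
          apply mul_le_mul_of_nonneg_right
          · exact Finset.prod_le_one (fun i _ => h0 i) (fun i _ => h1 i)
          · exact Finset.prod_nonneg fun i _ => h0 i
      _ = ∏ i ∈ s, f i := one_mul _
  exact tendsto_atTop_ciInf hanti ⟨0, fun x ⟨s, hs⟩ => hs ▸ Finset.prod_nonneg fun i _ => h0 i⟩

lemma uGamma_zero_val {t : ℝ} : uGamma 0 t = Real.exp (-t) := by
  simp only [uGamma, pow_zero, mul_one]
  exact integral_exp_neg_Ioi t

lemma uGamma_one_val {t : ℝ} (ht : 0 ≤ t) : uGamma 1 t = (1 + t) * Real.exp (-t) := by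
  have key : ∫ u in Set.Ioi t, Real.exp (-u) * u ^ 1 = 0 - (-(1 + t) * Real.exp (-t)) := by
    apply integral_Ioi_of_hasDerivAt_of_tendsto
      (f := fun u => -(1 + u) * Real.exp (-u))
    · exact (Continuous.continuousWithinAt (by fun_prop))
    · intro x _
      have h1 : HasDerivAt (fun u : ℝ => -(1 + u)) (-1) x := by
        exact ((hasDerivAt_id x).const_add 1).neg
      have h2 : HasDerivAt (fun u : ℝ => Real.exp (-u)) (-Real.exp (-x)) x := by
        simpa using ((hasDerivAt_id x).neg).exp
      have : HasDerivAt (fun u => -(1 + u) * Real.exp (-u))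
          (-1 * Real.exp (-x) + -(1 + x) * -Real.exp (-x)) x := h1.mul h2
      exact this.congr_deriv (by ring)
    · exact (uGamma_integrableOn 1).mono_set (Set.Ioi_subset_Ioi ht)
    · have hpow := Real.tendsto_pow_mul_exp_neg_atTop_nhds_zero 1
      simp only [pow_one] at hpow
      have h2 := Real.tendsto_exp_neg_atTop_nhds_zero
      have h3 := (h2.add hpow).neg
      simp only [add_zero, neg_zero] at h3
      exact h3.congr fun u => by ring
  rw [uGamma, key]
  ring

theorem product_upper_incomplete_gamma_le (t : ℝ) (ht : 0 ≤ t) :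
    (∏' n : ℕ, uGamma n t / (Nat.factorial n : ℝ)) ≤ (1 + t) * Real.exp (-2 * t) := by
  set f : ℕ → ℝ := fun n => uGamma n t / (Nat.factorial n : ℝ) with hf
  have h0 : ∀ n, 0 ≤ f n := fun n =>
    div_nonneg (uGamma_nonneg n ht) (Nat.cast_nonneg _)
  have h1 : ∀ n, f n ≤ 1 := fun n => by
    rw [div_le_one (by exact_mod_cast Nat.factorial_pos n)]
    exact uGamma_le n ht
  have hp := hasProd_of_le_one h0 h1
  rw [hp.tprod_eq]
  have hbdd : BddBelow (Set.range fun s : Finset ℕ => ∏ i ∈ s, f i) :=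
    ⟨0, fun x ⟨s, hs⟩ => hs ▸ Finset.prod_nonneg fun i _ => h0 i⟩
  have h01 : (⨅ s : Finset ℕ, ∏ i ∈ s, f i) ≤ ∏ i ∈ ({0, 1} : Finset ℕ), f i :=
    ciInf_le hbdd _
  refine h01.trans ?_
  rw [Finset.prod_pair (by norm_num)]
  simp only [hf, Nat.factorial_zero, Nat.factorial_one, Nat.cast_one, div_one]
  rw [uGamma_zero_val, uGamma_one_val ht]
  have : Real.exp (-t) * Real.exp (-t) = Real.exp (-2 * t) := by
    rw [← Real.exp_add]; ring_nf
  nlinarith [this]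
end

section
/- Let α_n ∈ (0,1), n ≥ 1, be a summable sequence with largest element α₁. Then (1/(1−α₁)) · ∏_{n≥1}(1−α_n) ≤ exp( −∑_{n≥1} α_n + 3/2 − (1/2)∑_{n≥1} α_n² ). -/
set_option maxHeartbeats 1000000
open Real

lemma log_one_sub_le_aux {x : ℝ} (h0 : 0 ≤ x) (h1 : x < 1) :
    Real.log (1 - x) ≤ -x - x ^ 2 / 2 := by
  set f : ℝ → ℝ := fun t => -t - t ^ 2 / 2 - Real.log (1 - t) with hf
  have hderiv : ∀ t ∈ Set.Ioo (0:ℝ) x, HasDerivAt f (-1 - t + 1/(1-t)) t := by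
    intro t ht
    have ht1 : t < 1 := lt_of_lt_of_le ht.2 h1.le
    have h1t : (1:ℝ) - t ≠ 0 := by linarith
    have hlog : HasDerivAt (fun t : ℝ => Real.log (1 - t)) (-(1/(1-t))) t := by
      have h := ((hasDerivAt_id t).const_sub 1).log h1t
      simpa [neg_div] using h
    have h2 : HasDerivAt (fun t : ℝ => -t - t ^ 2 / 2) (-1 - t) t := by
      have := ((hasDerivAt_id t).neg.sub (((hasDerivAt_pow 2 t)).div_const 2))
      exact this.congr_deriv (by norm_num)
    exact (h2.sub hlog).congr_deriv (by ring)
  have hcont : ContinuousOn f (Set.Icc 0 x) := by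
    apply ContinuousOn.sub (by fun_prop)
    apply ContinuousOn.log (by fun_prop)
    intro t ht
    have : t < 1 := lt_of_le_of_lt ht.2 h1
    intro h; linarith [sub_eq_zero.mp h]
  have hmono : f 0 ≤ f x := by
    rcases eq_or_lt_of_le h0 with h | h
    · rw [← h]
    · have key : ∀ t ∈ Set.Ioo (0:ℝ) x, 0 ≤ -1 - t + 1/(1-t) := by
        intro t ht
        have ht1 : t < 1 := lt_of_lt_of_le ht.2 h1.le
        have hpos : (0:ℝ) < 1 - t := by linarith
        have h4 : (1:ℝ) + t ≤ 1/(1-t) := by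
          rw [le_div_iff₀ hpos]; nlinarith [ht.1]
        linarith
      have hm : MonotoneOn f (Set.Icc 0 x) := by
        apply monotoneOn_of_deriv_nonneg (convex_Icc 0 x) hcont
        · intro t ht
          rw [interior_Icc] at ht
          exact (hderiv t ht).differentiableAt.differentiableWithinAt
        · intro t ht
          rw [interior_Icc] at ht
          rw [(hderiv t ht).deriv]
          exact key t ht
      exact hm (Set.left_mem_Icc.mpr h0) (Set.right_mem_Icc.mpr h0) h0
  simp only [hf, Real.log_one, sub_zero, neg_zero, ne_eq] at hmono
  norm_num at hmono
  linarith

theorem product_bound_three_halves (α : ℕ → ℝ)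
    (hα : ∀ n, 0 < α n ∧ α n < 1) (hsum : Summable α)
    (hmax : ∀ n, α n ≤ α 0) :
    (1 / (1 - α 0)) * (∏' n : ℕ, (1 - α n)) ≤
      Real.exp (-(∑' n : ℕ, α n) + 3 / 2 - (1 / 2) * ∑' n : ℕ, (α n) ^ 2) := by
  have hpos : ∀ n, (0:ℝ) < 1 - α n := fun n => by linarith [(hα n).2]
  -- summability of logs
  have hlogsum : Summable (fun n => Real.log (1 - α n)) := by
    apply Summable.of_norm
    apply Summable.of_nonneg_of_le (fun n => norm_nonneg _)
      (f := fun n => (1/(1 - α 0)) * α n)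
    · intro n
      rw [Real.norm_eq_abs, abs_of_nonpos (Real.log_nonpos (by linarith [(hα n).2]) (by linarith [(hα n).1]))]
      have h1 : Real.log (1/(1 - α n)) ≤ 1/(1 - α n) - 1 :=
        Real.log_le_sub_one_of_pos (by have := hpos n; positivity)
      rw [Real.log_div one_ne_zero (hpos n).ne', Real.log_one] at h1
      have h2 : 1/(1 - α n) - 1 = α n / (1 - α n) := by field_simp [(hpos n).ne']; ring
      have h3 : α n / (1 - α n) ≤ α n / (1 - α 0) := by
        apply div_le_div_of_nonneg_left (hα n).1.le (hpos 0)
        linarith [hmax n]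
      have h4 : (1/(1 - α 0)) * α n = α n/(1 - α 0) := by ring
      linarith
    · exact hsum.mul_left _
  -- product equals exp of sum of logs
  have hprod : (∏' n : ℕ, (1 - α n)) = Real.exp (∑' n, Real.log (1 - α n)) := by
    have := Real.rexp_tsum_eq_tprod (f := fun n => 1 - α n)
      hpos hlogsum
    exact this.symm
  have hsq : Summable (fun n => (α n) ^ 2) := by
    apply Summable.of_nonneg_of_le (fun n => sq_nonneg _) (fun n => ?_) hsum
    calc (α n)^2 = α n * α n := sq (α n) ▸ (sq (α n)).symm ▸ rfl
      _ ≤ 1 * α n := by nlinarith [(hα n).1, (hα n).2]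
      _ = α n := one_mul _
  -- the key bound on the exponent
  have hbound : ∑' n, Real.log (1 - α n) - Real.log (1 - α 0)
      ≤ -(∑' n, α n) + 3/2 - (1/2) * ∑' n, (α n)^2 := by
    rw [Summable.tsum_eq_zero_add hlogsum, Summable.tsum_eq_zero_add hsum, Summable.tsum_eq_zero_add hsq]
    have htail : ∑' n, Real.log (1 - α (n+1)) ≤ ∑' n, (-(α (n+1)) - (α (n+1))^2/2) := by
      apply Summable.tsum_le_tsum (fun n => log_one_sub_le_aux (hα (n+1)).1.le (hα (n+1)).2)
        ((summable_nat_add_iff 1).mpr hlogsum)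
      exact (((summable_nat_add_iff 1).mpr hsum).neg.sub
        (((summable_nat_add_iff 1).mpr hsq).div_const 2))
    have heq : ∑' n, (-(α (n+1)) - (α (n+1))^2/2)
        = -(∑' n, α (n+1)) - (∑' n, (α (n+1))^2)/2 := by
      rw [Summable.tsum_sub (((summable_nat_add_iff 1).mpr hsum).neg)
          (((summable_nat_add_iff 1).mpr hsq).div_const 2),
        tsum_neg, tsum_div_const]
    have h0 : α 0 + (α 0)^2/2 ≤ 3/2 := by nlinarith [(hα 0).2, (hα 0).1]
    rw [heq] at htail
    linarith
  calc (1 / (1 - α 0)) * (∏' n : ℕ, (1 - α n))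
      = Real.exp (∑' n, Real.log (1 - α n) - Real.log (1 - α 0)) := by
        rw [Real.exp_sub, hprod, Real.exp_log (hpos 0)]; ring
    _ ≤ _ := Real.exp_le_exp.mpr hbound
end
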